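/- arXiv:2402.14727 — 6 statements merged into one kernel-verified Lean document; each statement's English description precedes it below -/
import Mathlib

section
/- Let u, v, θ : ℝ → ℝ be smooth functions satisfying u'(s) = cos u(s) · cos θ(s), v'(s) = sin θ(s), and cos u(s) ≠ 0 for all s. Define Ψ(s,t) = (cos u(s) cos v(s), cos u(s) sin v(s), sin u(s), t) and N(s,t) = (cos θ(s) sin v(s) − sin θ(s) sin u(s) cos v(s), −cos θ(s) cos v(s) − sin θ(s) sin u(s) sin v(s), sin θ(s) cos u(s), 0). Then the mean curvature H(s,t) = (g₂₂b₁₁ − 2g₁₂b₁₂ + g₁₁b₂₂)/(g₁₁g₂₂ − g₁₂²) satisfies H(s,t) = tan u(s) · sin θ(s) − θ'(s)/cos u(s) for all (s,t). -/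
open Real

/-- The standard Euclidean inner product on `ℝ⁴` (indexed by `Fin 4`). -/
noncomputable def ip4 (a b : Fin 4 → ℝ) : ℝ :=
  a 0 * b 0 + a 1 * b 1 + a 2 * b 2 + a 3 * b 3

/-- The mean curvature `H = (g₂₂b₁₁ − 2g₁₂b₁₂ + g₁₁b₂₂)/(g₁₁g₂₂ − g₁₂²)` of a parametrized
surface `Ψ : ℝ² → ℝ⁴` with unit normal `N`, where `g₁₁ = ⟨Ψₛ,Ψₛ⟩`, `g₁₂ = ⟨Ψₛ,Ψₜ⟩`,
`g₂₂ = ⟨Ψₜ,Ψₜ⟩`, `b₁₁ = −⟨Nₛ,Ψₛ⟩`, `b₁₂ = −⟨Nₛ,Ψₜ⟩`, `b₂₂ = −⟨Nₜ,Ψₜ⟩`. -/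
noncomputable def meanCurv (Ψ N : ℝ → ℝ → Fin 4 → ℝ) (s t : ℝ) : ℝ :=
  let Ψs := deriv (fun s' => Ψ s' t) s
  let Ψt := deriv (fun t' => Ψ s t') t
  let Ns := deriv (fun s' => N s' t) s
  let Nt := deriv (fun t' => N s t') t
  let g11 := ip4 Ψs Ψs
  let g12 := ip4 Ψs Ψt
  let g22 := ip4 Ψt Ψt
  let b11 := -ip4 Ns Ψs
  let b12 := -ip4 Ns Ψt
  let b22 := -ip4 Nt Ψt
  (g22 * b11 - 2 * g12 * b12 + g11 * b22) / (g11 * g22 - g12 ^ 2)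

/-- The mean curvature of the vertical surface `Ψ(s,t) = (cos u cos v, cos u sin v, sin u, t)`
in `𝕊²×ℝ ⊂ ℝ⁴`, with respect to the unit normal `N` below, equals
`H = tan u · sin θ − θ'/cos u`. -/
theorem vertical_surface_mean_curvature (u v θ : ℝ → ℝ)
    (hu : ContDiff ℝ (⊤ : ℕ∞) u) (hv : ContDiff ℝ (⊤ : ℕ∞) v) (hθ : ContDiff ℝ (⊤ : ℕ∞) θ)
    (hu' : ∀ s, deriv u s = cos (u s) * cos (θ s))
    (hv' : ∀ s, deriv v s = sin (θ s))
    (hreg : ∀ s, cos (u s) ≠ 0)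
    (Ψ N : ℝ → ℝ → Fin 4 → ℝ)
    (hΨ : ∀ s t, Ψ s t =
      ![cos (u s) * cos (v s), cos (u s) * sin (v s), sin (u s), t])
    (hN : ∀ s t, N s t =
      ![cos (θ s) * sin (v s) - sin (θ s) * sin (u s) * cos (v s),
        -(cos (θ s) * cos (v s)) - sin (θ s) * sin (u s) * sin (v s),
        sin (θ s) * cos (u s), 0]) :
    ∀ s t : ℝ,
      meanCurv Ψ N s t = tan (u s) * sin (θ s) - deriv θ s / cos (u s) := by

  intro s t
  have hud : HasDerivAt u (deriv u s) s := (hu.differentiable (by simp) s).hasDerivAt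
  have hvd : HasDerivAt v (deriv v s) s := (hv.differentiable (by simp) s).hasDerivAt
  have hθd : HasDerivAt θ (deriv θ s) s := (hθ.differentiable (by simp) s).hasDerivAt
  have hcu : HasDerivAt (fun x => cos (u x)) (-sin (u s) * deriv u s) s :=
    (Real.hasDerivAt_cos (u s)).comp s hud
  have hsu : HasDerivAt (fun x => sin (u x)) (cos (u s) * deriv u s) s :=
    (Real.hasDerivAt_sin (u s)).comp s hud
  have hcv : HasDerivAt (fun x => cos (v x)) (-sin (v s) * deriv v s) s :=
    (Real.hasDerivAt_cos (v s)).comp s hvd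
  have hsv : HasDerivAt (fun x => sin (v x)) (cos (v s) * deriv v s) s :=
    (Real.hasDerivAt_sin (v s)).comp s hvd
  have hcθ : HasDerivAt (fun x => cos (θ x)) (-sin (θ s) * deriv θ s) s :=
    (Real.hasDerivAt_cos (θ s)).comp s hθd
  have hsθ : HasDerivAt (fun x => sin (θ x)) (cos (θ s) * deriv θ s) s :=
    (Real.hasDerivAt_sin (θ s)).comp s hθd
  -- Ψ_s
  have hΨs : deriv (fun s' => Ψ s' t) s =
      ![-sin (u s) * deriv u s * cos (v s) + cos (u s) * (-sin (v s) * deriv v s),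
        -sin (u s) * deriv u s * sin (v s) + cos (u s) * (cos (v s) * deriv v s),
        cos (u s) * deriv u s, 0] := by
    have hfun : (fun s' => Ψ s' t) = fun s' =>
        ![cos (u s') * cos (v s'), cos (u s') * sin (v s'), sin (u s'), t] :=
      funext fun s' => hΨ s' t
    rw [hfun]
    refine (hasDerivAt_pi.2 ?_).deriv
    intro i
    fin_cases i <;>
      simp only [Matrix.cons_val_zero, Matrix.cons_val_one, Matrix.head_cons,
        Matrix.cons_val_two, Matrix.tail_cons, Matrix.cons_val_three, Fin.mk_zero,
        Fin.mk_one, Fin.isValue]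
    · exact hcu.mul hcv
    · exact hcu.mul hsv
    · exact hsu
    · exact hasDerivAt_const s t
  -- Ψ_t
  have hΨt : deriv (fun t' => Ψ s t') t = ![0, 0, 0, 1] := by
    have hfun : (fun t' => Ψ s t') = fun t' =>
        ![cos (u s) * cos (v s), cos (u s) * sin (v s), sin (u s), t'] :=
      funext fun t' => hΨ s t'
    rw [hfun]
    refine (hasDerivAt_pi.2 ?_).deriv
    intro i
    fin_cases i <;>
      simp only [Matrix.cons_val_zero, Matrix.cons_val_one, Matrix.head_cons,
        Matrix.cons_val_two, Matrix.tail_cons, Matrix.cons_val_three, Fin.mk_zero,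
        Fin.mk_one, Fin.isValue]
    · exact hasDerivAt_const t _
    · exact hasDerivAt_const t _
    · exact hasDerivAt_const t _
    · exact hasDerivAt_id t
  -- N_s
  have hNs : deriv (fun s' => N s' t) s =
      ![(-sin (θ s) * deriv θ s) * sin (v s) + cos (θ s) * (cos (v s) * deriv v s) -
          (((cos (θ s) * deriv θ s) * sin (u s) + sin (θ s) * (cos (u s) * deriv u s)) * cos (v s)
            + sin (θ s) * sin (u s) * (-sin (v s) * deriv v s)),
        -((-sin (θ s) * deriv θ s) * cos (v s) + cos (θ s) * (-sin (v s) * deriv v s)) -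
          (((cos (θ s) * deriv θ s) * sin (u s) + sin (θ s) * (cos (u s) * deriv u s)) * sin (v s)
            + sin (θ s) * sin (u s) * (cos (v s) * deriv v s)),
        (cos (θ s) * deriv θ s) * cos (u s) + sin (θ s) * (-sin (u s) * deriv u s), 0] := by
    have hfun : (fun s' => N s' t) = fun s' =>
        ![cos (θ s') * sin (v s') - sin (θ s') * sin (u s') * cos (v s'),
          -(cos (θ s') * cos (v s')) - sin (θ s') * sin (u s') * sin (v s'),
          sin (θ s') * cos (u s'), 0] :=
      funext fun s' => hN s' t
    rw [hfun]
    refine (hasDerivAt_pi.2 ?_).deriv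
    intro i
    fin_cases i <;>
      simp only [Matrix.cons_val_zero, Matrix.cons_val_one, Matrix.head_cons,
        Matrix.cons_val_two, Matrix.tail_cons, Matrix.cons_val_three, Fin.mk_zero,
        Fin.mk_one, Fin.isValue]
    · exact (hcθ.mul hsv).sub (((hsθ.mul hsu)).mul hcv)
    · exact ((hcθ.mul hcv).neg).sub (((hsθ.mul hsu)).mul hsv)
    · exact hsθ.mul hcu
    · exact hasDerivAt_const s 0
  -- N_t
  have hNt : deriv (fun t' => N s t') t = ![0, 0, 0, 0] := by
    have hfun : (fun t' => N s t') = fun _ =>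
        ![cos (θ s) * sin (v s) - sin (θ s) * sin (u s) * cos (v s),
          -(cos (θ s) * cos (v s)) - sin (θ s) * sin (u s) * sin (v s),
          sin (θ s) * cos (u s), 0] :=
      funext fun t' => hN s t'
    rw [hfun]
    refine (hasDerivAt_pi.2 ?_).deriv
    intro i
    fin_cases i <;> exact hasDerivAt_const t _
  simp only [meanCurv, hΨs, hΨt, hNs, hNt, ip4, Matrix.cons_val_zero, Matrix.cons_val_one,
    Matrix.head_cons, Matrix.cons_val_two, Matrix.tail_cons, Matrix.cons_val_three,
    Fin.isValue, hu' s, hv' s]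
  have pu := sin_sq_add_cos_sq (u s)
  have pv := sin_sq_add_cos_sq (v s)
  have pθ := sin_sq_add_cos_sq (θ s)
  have hA := hreg s
  have hnum : (0 * 0 + 0 * 0 + 0 * 0 + 1 * 1) *
            -((-sin (θ s) * deriv θ s * sin (v s) + cos (θ s) * (cos (v s) * sin (θ s)) - ((cos (θ s) * deriv θ s * sin (u s) + sin (θ s) * (cos (u s) * (cos (u s) * cos (θ s)))) * cos (v s) + sin (θ s) * sin (u s) * (-sin (v s) * sin (θ s)))) *
                      (-sin (u s) * (cos (u s) * cos (θ s)) * cos (v s) + cos (u s) * (-sin (v s) * sin (θ s))) +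
                    (-(-sin (θ s) * deriv θ s * cos (v s) + cos (θ s) * (-sin (v s) * sin (θ s))) - ((cos (θ s) * deriv θ s * sin (u s) + sin (θ s) * (cos (u s) * (cos (u s) * cos (θ s)))) * sin (v s) + sin (θ s) * sin (u s) * (cos (v s) * sin (θ s)))) *
                      (-sin (u s) * (cos (u s) * cos (θ s)) * sin (v s) + cos (u s) * (cos (v s) * sin (θ s))) +
                  (cos (θ s) * deriv θ s * cos (u s) + sin (θ s) * (-sin (u s) * (cos (u s) * cos (θ s)))) * (cos (u s) * (cos (u s) * cos (θ s))) +
                0 * 0) -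
          2 *
              ((-sin (u s) * (cos (u s) * cos (θ s)) * cos (v s) + cos (u s) * (-sin (v s) * sin (θ s))) * 0 + (-sin (u s) * (cos (u s) * cos (θ s)) * sin (v s) + cos (u s) * (cos (v s) * sin (θ s))) * 0 + cos (u s) * (cos (u s) * cos (θ s)) * 0 +
                0 * 1) *
            -((-sin (θ s) * deriv θ s * sin (v s) + cos (θ s) * (cos (v s) * sin (θ s)) - ((cos (θ s) * deriv θ s * sin (u s) + sin (θ s) * (cos (u s) * (cos (u s) * cos (θ s)))) * cos (v s) + sin (θ s) * sin (u s) * (-sin (v s) * sin (θ s)))) * 0 +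
                    (-(-sin (θ s) * deriv θ s * cos (v s) + cos (θ s) * (-sin (v s) * sin (θ s))) - ((cos (θ s) * deriv θ s * sin (u s) + sin (θ s) * (cos (u s) * (cos (u s) * cos (θ s)))) * sin (v s) + sin (θ s) * sin (u s) * (cos (v s) * sin (θ s)))) * 0 +
                  (cos (θ s) * deriv θ s * cos (u s) + sin (θ s) * (-sin (u s) * (cos (u s) * cos (θ s)))) * 0 +
                0 * 1) +
        ((-sin (u s) * (cos (u s) * cos (θ s)) * cos (v s) + cos (u s) * (-sin (v s) * sin (θ s))) * (-sin (u s) * (cos (u s) * cos (θ s)) * cos (v s) + cos (u s) * (-sin (v s) * sin (θ s))) +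
                (-sin (u s) * (cos (u s) * cos (θ s)) * sin (v s) + cos (u s) * (cos (v s) * sin (θ s))) * (-sin (u s) * (cos (u s) * cos (θ s)) * sin (v s) + cos (u s) * (cos (v s) * sin (θ s))) +
              cos (u s) * (cos (u s) * cos (θ s)) * (cos (u s) * (cos (u s) * cos (θ s))) +
            0 * 0) *
          -(0 * 0 + 0 * 0 + 0 * 0 + 0 * 1) =
      cos (u s) * (sin (u s) * sin (θ s) - deriv θ s) := by
    linear_combination ((-1)*cos (u s)*sin (θ s)*sin (θ s)*deriv θ s + cos (u s)*sin (u s)*sin (θ s)*sin (θ s)*sin (θ s) + cos (u s)*sin (u s)*cos (θ s)*cos (θ s)*sin (θ s) + (-1)*cos (u s)*sin (u s)*sin (u s)*cos (θ s)*cos (θ s)*deriv θ s + (-1)*cos (u s)*cos (u s)*cos (u s)*sin (u s)*cos (θ s)*cos (θ s)*sin (θ s)) * pv + ((-1)*cos (u s)*cos (θ s)*cos (θ s)*deriv θ s) * pu + ((-1)*cos (u s)*deriv θ s + cos (u s)*sin (u s)*sin (θ s)) * pθ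
  have hden : ((-sin (u s) * (cos (u s) * cos (θ s)) * cos (v s) + cos (u s) * (-sin (v s) * sin (θ s))) * (-sin (u s) * (cos (u s) * cos (θ s)) * cos (v s) + cos (u s) * (-sin (v s) * sin (θ s))) +
                (-sin (u s) * (cos (u s) * cos (θ s)) * sin (v s) + cos (u s) * (cos (v s) * sin (θ s))) * (-sin (u s) * (cos (u s) * cos (θ s)) * sin (v s) + cos (u s) * (cos (v s) * sin (θ s))) +
              cos (u s) * (cos (u s) * cos (θ s)) * (cos (u s) * (cos (u s) * cos (θ s))) +
            0 * 0) *
          (0 * 0 + 0 * 0 + 0 * 0 + 1 * 1) -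
        ((-sin (u s) * (cos (u s) * cos (θ s)) * cos (v s) + cos (u s) * (-sin (v s) * sin (θ s))) * 0 + (-sin (u s) * (cos (u s) * cos (θ s)) * sin (v s) + cos (u s) * (cos (v s) * sin (θ s))) * 0 + cos (u s) * (cos (u s) * cos (θ s)) * 0 + 0 * 1) ^
          2 = cos (u s) ^ 2 := by
    linear_combination (cos (u s)^2 * sin (u s)^2 * cos (θ s)^2 + cos (u s)^2 * sin (θ s)^2) * pv + cos (u s)^2 * cos (θ s)^2 * pu + cos (u s)^2 * pθ
  rw [hnum, hden, Real.tan_eq_sin_div_cos]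
  field_simp
end

section
/- Let u, v, θ : ℝ → ℝ be smooth functions satisfying u'(s) = cos u(s) · cos θ(s), v'(s) = sin θ(s), and cos u(s) ≠ 0 for all s, let Ψ(s,t) = (cos u(s) cos v(s), cos u(s) sin v(s), sin u(s), t) with unit normal N(s,t) = (cos θ(s) sin v(s) − sin θ(s) sin u(s) cos v(s), −cos θ(s) cos v(s) − sin θ(s) sin u(s) sin v(s), sin θ(s) cos u(s), 0) and mean curvature H defined via the fundamental forms, and let α(s) = (cos u(s) cos v(s), cos u(s) sin v(s), sin u(s)) ∈ ℝ³ be the generating curve. Then the following are equivalent: (i) H(s,t) = ⟨N(s,t), (0,0,0,1)⟩ for all (s,t); (ii) θ'(s) = sin u(s) · sin θ(s) for all s; (iii) det(α(s), α'(s), α''(s)) = 0 for all s, i.e. α is a geodesic of the unit sphere 𝕊². -/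
open Real

private lemma hasDerivAt_congr' {f : ℝ → ℝ} {a b x : ℝ} (h : HasDerivAt f a x) (e : a = b) :
    HasDerivAt f b x := e ▸ h

private lemma hasDerivAt_vec4 {f0 f1 f2 f3 : ℝ → ℝ} {d0 d1 d2 d3 x : ℝ}
    (h0 : HasDerivAt f0 d0 x) (h1 : HasDerivAt f1 d1 x) (h2 : HasDerivAt f2 d2 x)
    (h3 : HasDerivAt f3 d3 x) :
    HasDerivAt (fun y => ![f0 y, f1 y, f2 y, f3 y]) ![d0, d1, d2, d3] x := by
  rw [hasDerivAt_pi]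
  intro i
  fin_cases i <;>
    simp only [Matrix.cons_val_zero, Matrix.cons_val_one, Matrix.head_cons,
      Matrix.cons_val_two, Matrix.tail_cons, Matrix.cons_val_three, Fin.isValue] <;>
    assumption

private lemma hasDerivAt_vec3 {f0 f1 f2 : ℝ → ℝ} {d0 d1 d2 x : ℝ}
    (h0 : HasDerivAt f0 d0 x) (h1 : HasDerivAt f1 d1 x) (h2 : HasDerivAt f2 d2 x) :
    HasDerivAt (fun y => ![f0 y, f1 y, f2 y]) ![d0, d1, d2] x := by
  rw [hasDerivAt_pi]
  intro i
  fin_cases i <;>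
    simp only [Matrix.cons_val_zero, Matrix.cons_val_one, Matrix.head_cons,
      Matrix.cons_val_two, Matrix.tail_cons, Fin.isValue] <;>
    assumption

private lemma div_helper7 {A B x c : ℝ} (hc : c ≠ 0) (hB : B = c ^ 2) (hA : A = -c * x) :
    A / B = -x / c := by
  subst hB hA
  rw [div_eq_div_iff (by positivity) hc]
  ring

/-- A vertical surface `Ψ(s,t) = (cos u cos v, cos u sin v, sin u, t)` in `𝕊²×ℝ ⊂ ℝ⁴` is a
`V`-soliton (`H = ⟨N, V⟩` with `V = (0,0,0,1)`) if and only if `θ' = sin u · sin θ`, if and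
only if its generating curve `α` on the unit sphere `𝕊² ⊂ ℝ³` is a geodesic, i.e.
`det(α, α', α'') ≡ 0`. -/
theorem vertical_V_soliton_iff_geodesic (u v θ : ℝ → ℝ)
    (hu : ContDiff ℝ (⊤ : ℕ∞) u) (hv : ContDiff ℝ (⊤ : ℕ∞) v) (hθ : ContDiff ℝ (⊤ : ℕ∞) θ)
    (hu' : ∀ s, deriv u s = cos (u s) * cos (θ s))
    (hv' : ∀ s, deriv v s = sin (θ s))
    (hreg : ∀ s, cos (u s) ≠ 0)
    (Ψ N : ℝ → ℝ → Fin 4 → ℝ)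
    (hΨ : ∀ s t, Ψ s t =
      ![cos (u s) * cos (v s), cos (u s) * sin (v s), sin (u s), t])
    (hN : ∀ s t, N s t =
      ![cos (θ s) * sin (v s) - sin (θ s) * sin (u s) * cos (v s),
        -(cos (θ s) * cos (v s)) - sin (θ s) * sin (u s) * sin (v s),
        sin (θ s) * cos (u s), 0])
    (α : ℝ → Fin 3 → ℝ)
    (hα : ∀ s, α s = ![cos (u s) * cos (v s), cos (u s) * sin (v s), sin (u s)]) :
    ((∀ s t : ℝ, meanCurv Ψ N s t = ip4 (N s t) ![0, 0, 0, 1]) ↔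
        (∀ s : ℝ, deriv θ s = sin (u s) * sin (θ s))) ∧
    ((∀ s : ℝ, deriv θ s = sin (u s) * sin (θ s)) ↔
        (∀ s : ℝ, Matrix.det (Matrix.of ![α s, deriv α s, deriv (deriv α) s]) = 0)) := by
  have hud : ∀ s, HasDerivAt u (cos (u s) * cos (θ s)) s := fun s =>
    hu' s ▸ (hu.differentiable (by simp) s).hasDerivAt
  have hvd : ∀ s, HasDerivAt v (sin (θ s)) s := fun s =>
    hv' s ▸ (hv.differentiable (by simp) s).hasDerivAt
  have hθd : ∀ s, HasDerivAt θ (deriv θ s) s := fun s =>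
    (hθ.differentiable (by simp) s).hasDerivAt
  have hNV : ∀ s t : ℝ, ip4 (N s t) ![0, 0, 0, 1] = 0 := by
    intro s t
    rw [hN]
    simp [ip4]
  have main : ∀ s t : ℝ, meanCurv Ψ N s t =
      -(deriv θ s - sin (u s) * sin (θ s)) / cos (u s) := by
    intro s t
    have hu_d := hud s
    have hv_d := hvd s
    have hθ_d := hθd s
    have hfun1 : (fun s' => Ψ s' t) =
        (fun s' => ![cos (u s') * cos (v s'), cos (u s') * sin (v s'), sin (u s'), t]) :=
      funext fun s' => hΨ s' t
    have hfun2 : (fun t' => Ψ s t') =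
        (fun t' => ![cos (u s) * cos (v s), cos (u s) * sin (v s), sin (u s), t']) :=
      funext fun t' => hΨ s t'
    have hfun3 : (fun s' => N s' t) =
        (fun s' => ![cos (θ s') * sin (v s') - sin (θ s') * sin (u s') * cos (v s'),
          -(cos (θ s') * cos (v s')) - sin (θ s') * sin (u s') * sin (v s'),
          sin (θ s') * cos (u s'), 0]) :=
      funext fun s' => hN s' t
    have hfun4 : (fun t' => N s t') =
        (fun _ => ![cos (θ s) * sin (v s) - sin (θ s) * sin (u s) * cos (v s),
          -(cos (θ s) * cos (v s)) - sin (θ s) * sin (u s) * sin (v s),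
          sin (θ s) * cos (u s), 0]) :=
      funext fun t' => hN s t'
    have hd1 : HasDerivAt
        (fun s' => ![cos (u s') * cos (v s'), cos (u s') * sin (v s'), sin (u s'), t]) _ s :=
      hasDerivAt_vec4 ((hu_d.cos).mul (hv_d.cos)) ((hu_d.cos).mul (hv_d.sin)) hu_d.sin
        (hasDerivAt_const s t)
    have hd2 : HasDerivAt
        (fun t' => ![cos (u s) * cos (v s), cos (u s) * sin (v s), sin (u s), t'])
        ![0, 0, 0, 1] t :=
      hasDerivAt_vec4 (hasDerivAt_const t _) (hasDerivAt_const t _) (hasDerivAt_const t _)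
        (hasDerivAt_id' t)
    have hd3 : HasDerivAt
        (fun s' => ![cos (θ s') * sin (v s') - sin (θ s') * sin (u s') * cos (v s'),
          -(cos (θ s') * cos (v s')) - sin (θ s') * sin (u s') * sin (v s'),
          sin (θ s') * cos (u s'), 0]) _ s :=
      hasDerivAt_vec4
        (((hθ_d.cos).mul (hv_d.sin)).sub (((hθ_d.sin).mul (hu_d.sin)).mul (hv_d.cos)))
        ((((hθ_d.cos).mul (hv_d.cos)).neg).sub (((hθ_d.sin).mul (hu_d.sin)).mul (hv_d.sin)))
        ((hθ_d.sin).mul (hu_d.cos))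
        (hasDerivAt_const s (0 : ℝ))
    simp only [meanCurv]
    rw [hfun1, hfun2, hfun3, hfun4, hd1.deriv, hd2.deriv, hd3.deriv, deriv_const]
    simp only [ip4, Matrix.cons_val_zero, Matrix.cons_val_one, Matrix.head_cons,
      Matrix.cons_val_two, Matrix.tail_cons, Matrix.cons_val_three, Fin.isValue,
      Pi.zero_apply, Pi.mul_apply]
    have hPu := sin_sq_add_cos_sq (u s)
    have hPv := sin_sq_add_cos_sq (v s)
    have hPth := sin_sq_add_cos_sq (θ s)
    exact div_helper7 (hreg s)
      (by linear_combination (cos (u s) ^ 2 * cos (v s) ^ 2 * cos (θ s) ^ 2 + cos (u s) ^ 2 * sin (v s) ^ 2 * cos (θ s) ^ 2) * hPu + (cos (u s) ^ 2 * cos (θ s) ^ 2 + cos (u s) ^ 2 * sin (θ s) ^ 2 + (-1) * cos (u s) ^ 4 * cos (θ s) ^ 2) * hPv + (cos (u s) ^ 2) * hPth)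
      (by linear_combination ((-1) * cos (u s) * cos (v s) ^ 2 * cos (θ s) ^ 2 * deriv θ s + (-1) * cos (u s) * sin (v s) ^ 2 * cos (θ s) ^ 2 * deriv θ s) * hPu + ((-1) * cos (u s) * cos (θ s) ^ 2 * deriv θ s + (-1) * cos (u s) * sin (θ s) ^ 2 * deriv θ s + cos (u s) ^ 3 * cos (θ s) ^ 2 * deriv θ s + sin (u s) * cos (u s) * sin (θ s) * cos (θ s) ^ 2 + sin (u s) * cos (u s) * sin (θ s) ^ 3 + (-1) * sin (u s) * cos (u s) ^ 3 * sin (θ s) * cos (θ s) ^ 2) * hPv + ((-1) * cos (u s) * deriv θ s + sin (u s) * cos (u s) * sin (θ s)) * hPth)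
  have key : ∀ s : ℝ, Matrix.det (Matrix.of ![α s, deriv α s, deriv (deriv α) s]) =
      -cos (u s) ^ 2 * (deriv θ s - sin (u s) * sin (θ s)) := by
    intro s
    have hαfun : α =
        (fun s0 => ![cos (u s0) * cos (v s0), cos (u s0) * sin (v s0), sin (u s0)]) :=
      funext hα
    rw [hαfun]
    have hA1 : deriv (fun s0 => ![cos (u s0) * cos (v s0), cos (u s0) * sin (v s0),
        sin (u s0)]) =
        (fun s0 => ![-(cos (u s0) * cos (θ s0)) * sin (u s0) * cos (v s0) -
            sin (θ s0) * cos (u s0) * sin (v s0),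
          -(cos (u s0) * cos (θ s0)) * sin (u s0) * sin (v s0) +
            sin (θ s0) * cos (u s0) * cos (v s0),
          cos (θ s0) * cos (u s0) ^ 2]) := by
      funext s1
      have hu_d := hud s1
      have hv_d := hvd s1
      have hθ_d := hθd s1
      have c0 : HasDerivAt (fun x => cos (u x) * cos (v x))
          (-(cos (u s1) * cos (θ s1)) * sin (u s1) * cos (v s1) -
            sin (θ s1) * cos (u s1) * sin (v s1)) s1 :=
        hasDerivAt_congr' ((hu_d.cos).mul (hv_d.cos)) (by ring)
      have c1 : HasDerivAt (fun x => cos (u x) * sin (v x))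
          (-(cos (u s1) * cos (θ s1)) * sin (u s1) * sin (v s1) +
            sin (θ s1) * cos (u s1) * cos (v s1)) s1 :=
        hasDerivAt_congr' ((hu_d.cos).mul (hv_d.sin)) (by ring)
      have c2 : HasDerivAt (fun x => sin (u x)) (cos (θ s1) * cos (u s1) ^ 2) s1 :=
        hasDerivAt_congr' hu_d.sin (by ring)
      exact (hasDerivAt_vec3 c0 c1 c2).deriv
    rw [hA1]
    have hu_d := hud s
    have hv_d := hvd s
    have hθ_d := hθd s
    have hd2 : HasDerivAt (fun s0 => ![-(cos (u s0) * cos (θ s0)) * sin (u s0) * cos (v s0) -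
            sin (θ s0) * cos (u s0) * sin (v s0),
          -(cos (u s0) * cos (θ s0)) * sin (u s0) * sin (v s0) +
            sin (θ s0) * cos (u s0) * cos (v s0),
          cos (θ s0) * cos (u s0) ^ 2]) _ s :=
      hasDerivAt_vec3
        ((((((hu_d.cos).mul (hθ_d.cos)).neg).mul (hu_d.sin)).mul (hv_d.cos)).sub
          (((hθ_d.sin).mul (hu_d.cos)).mul (hv_d.sin)))
        ((((((hu_d.cos).mul (hθ_d.cos)).neg).mul (hu_d.sin)).mul (hv_d.sin)).add
          (((hθ_d.sin).mul (hu_d.cos)).mul (hv_d.cos)))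
        ((hθ_d.cos).mul ((hu_d.cos).pow 2))
    rw [hd2.deriv]
    simp only [Matrix.det_fin_three, Matrix.of_apply, Matrix.cons_val', Matrix.cons_val_zero,
      Matrix.cons_val_one, Matrix.head_cons, Matrix.cons_val_two, Matrix.tail_cons,
      Matrix.head_fin_const, Matrix.empty_val', Matrix.cons_val_fin_one, Fin.isValue,
      Pi.mul_apply, Pi.neg_apply]
    have hPu := sin_sq_add_cos_sq (u s)
    have hPv := sin_sq_add_cos_sq (v s)
    have hPth := sin_sq_add_cos_sq (θ s)
    linear_combination ((-1) * cos (u s) ^ 2 * cos (v s) ^ 2 * cos (θ s) ^ 2 * deriv θ s + (-1) * cos (u s) ^ 2 * cos (v s) ^ 2 * sin (θ s) ^ 2 * deriv θ s + (-1) * cos (u s) ^ 2 * sin (v s) ^ 2 * cos (θ s) ^ 2 * deriv θ s + (-1) * cos (u s) ^ 2 * sin (v s) ^ 2 * sin (θ s) ^ 2 * deriv θ s + sin (u s) * cos (u s) ^ 2 * cos (v s) ^ 2 * sin (θ s) * cos (θ s) ^ 2 + sin (u s) * cos (u s) ^ 2 * sin (v s) ^ 2 * sin (θ s) * cos (θ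 s) ^ 2) * hPu + ((-1) * cos (u s) ^ 2 * cos (θ s) ^ 2 * deriv θ s + (-1) * cos (u s) ^ 2 * sin (θ s) ^ 2 * deriv θ s + sin (u s) * cos (u s) ^ 2 * sin (θ s) * cos (θ s) ^ 2 + sin (u s) * cos (u s) ^ 2 * sin (θ s) ^ 3) * hPv + ((-1) * cos (u s) ^ 2 * deriv θ s + sin (u s) * cos (u s) ^ 2 * sin (θ s)) * hPth
  constructor
  · constructor
    · intro h s
      have h0 := h s 0
      rw [main, hNV] at h0
      have hc := hreg s
      rcases div_eq_zero_iff.mp h0 with h1 | h2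
      · linarith [neg_eq_zero.mp h1]
      · exact absurd h2 hc
    · intro h s t
      rw [main, hNV, h s]
      simp
  · constructor
    · intro h s
      rw [key s, h s]
      ring
    · intro h s
      have h0 := key s
      rw [h s] at h0
      have hc := hreg s
      have h1 : cos (u s) ^ 2 * (deriv θ s - sin (u s) * sin (θ s)) = 0 := by linarith
      rcases mul_eq_zero.mp h1 with h2 | h3
      · exact absurd h2 (pow_ne_zero 2 hc)
      · linarith
end

section
/- Let u, v, θ : ℝ → ℝ be differentiable functions satisfying u'(s) = cos θ(s), v'(s) = sin θ(s), θ'(s) = sin θ(s) · tan u(s) + cos θ(s), and |u(s)| < π/2 for all s ∈ ℝ, with initial conditions u(0) = v(0) = θ(0) = 0. Then for all s ∈ ℝ: u(−s) = −u(s), v(−s) = v(s), and θ(−s) = −θ(s); in particular the planar curve β(s) = (u(s), v(s)) is symmetric with respect to the v-axis. -/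
/-!
The field `F (u, θ) = (cos θ, sin θ · tan u + cos θ)` is even, so with `s ↦ (u s, θ s)` also
`s ↦ -(u (-s), θ (-s))` solves `x' = F x`; both pass through the origin at `s = 0`, and `F` is `C¹`
on the open set `|u| < π/2`, so uniqueness makes `(u, θ)` odd. Then `v' = sin θ` is odd, so `v` is
even.
-/

open Real Set

section Autonomous

variable {E : Type*} [NormedAddCommGroup E] [NormedSpace ℝ E]

theorem HasDerivAt.comp_neg {f : ℝ → E} {f' : E} {t : ℝ} (hf : HasDerivAt f f' (-t)) :
    HasDerivAt (fun s => f (-s)) (-f') t := by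
  simpa [Function.comp_def] using hf.scomp t (hasDerivAt_neg t)

theorem Function.Even.of_hasDerivAt_odd {f f' : ℝ → E} (hf : ∀ t, HasDerivAt f (f' t) t)
    (hf' : Function.Odd f') : Function.Even f := by
  have hrev : ∀ t, HasDerivAt (fun s => f (-s)) (f' t) t := fun t => by
    simpa [hf' t] using (hf (-t)).comp_neg
  have := eq_of_fderiv_eq (fun t => (hrev t).differentiableAt) (fun t => (hf t).differentiableAt)
    (fun t => by rw [(hrev t).hasFDerivAt.fderiv, (hf t).hasFDerivAt.fderiv]) 0 (by simp)
  exact congrFun this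

theorem IsOpen.locallyLipschitzOn_of_contDiffOn {F : E → E} {U : Set E} (hU : IsOpen U)
    (hF : ContDiffOn ℝ 1 F U) : LocallyLipschitzOn U F := fun x hx => by
  obtain ⟨K, t, ht, hK⟩ := (hF.contDiffAt (hU.mem_nhds hx)).exists_lipschitzOnWith
  exact ⟨K, t, nhdsWithin_le_nhds ht, hK⟩

theorem ODE_solution_unique_of_contDiffOn {F : E → E} {U : Set E} (hU : IsOpen U)
    (hF : ContDiffOn ℝ 1 F U) {f g : ℝ → E} {t₀ : ℝ}
    (hf : ∀ t, HasDerivAt f (F (f t)) t ∧ f t ∈ U) (hg : ∀ t, HasDerivAt g (F (g t)) t ∧ g t ∈ U)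
    (heq : f t₀ = g t₀) : f = g := by
  ext t
  obtain ⟨a, b, ht, ht₀⟩ : ∃ a b, t ∈ Ioo a b ∧ t₀ ∈ Ioo a b :=
    ⟨min t t₀ - 1, max t t₀ + 1, by constructor <;> grind, by constructor <;> grind⟩
  have hcont {h : ℝ → E} (hh : ∀ t, HasDerivAt h (F (h t)) t ∧ h t ∈ U) : Continuous h :=
    continuous_iff_continuousAt.2 fun s => (hh s).1.continuousAt
  set K := f '' Icc a b ∪ g '' Icc a b
  have hKU : K ⊆ U := union_subset (image_subset_iff.2 fun s _ => (hf s).2)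
    (image_subset_iff.2 fun s _ => (hg s).2)
  have hK : IsCompact K :=
    (isCompact_Icc.image (hcont hf)).union (isCompact_Icc.image (hcont hg))
  obtain ⟨L, hL⟩ :=
    ((hU.locallyLipschitzOn_of_contDiffOn hF).mono hKU).exists_lipschitzOnWith_of_compact hK
  refine ODE_solution_unique_of_mem_Ioo (v := fun _ => F) (s := fun _ => K) (fun _ _ => hL) ht₀
    (fun s hs => ⟨(hf s).1, Or.inl ⟨s, Ioo_subset_Icc_self hs, rfl⟩⟩)
    (fun s hs => ⟨(hg s).1, Or.inr ⟨s, Ioo_subset_Icc_self hs, rfl⟩⟩) heq ht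

theorem Function.Odd.of_solution_of_even {F : E → E} {U : Set E} (hU : IsOpen U)
    (hF : ContDiffOn ℝ 1 F U) (hF_even : Function.Even F) (hU_neg : ∀ x ∈ U, -x ∈ U)
    {f : ℝ → E} (hf : ∀ t, HasDerivAt f (F (f t)) t ∧ f t ∈ U) (hf₀ : f 0 = 0) :
    Function.Odd f := by
  have hrev : ∀ t, HasDerivAt (fun s => -f (-s)) (F (-f (-t))) t ∧ -f (-t) ∈ U := fun t =>
    ⟨by simpa [hF_even (f (-t))] using ((hf (-t)).1.comp_neg).fun_neg, hU_neg _ (hf (-t)).2⟩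
  have := ODE_solution_unique_of_contDiffOn hU hF hf hrev (t₀ := 0) (by simp [hf₀])
  intro t
  rw [congrFun this t, neg_neg]

end Autonomous

noncomputable def rotationalVSolitonField (p : ℝ × ℝ) : ℝ × ℝ :=
  (cos p.2, sin p.2 * tan p.1 + cos p.2)

theorem rotationalVSolitonField_even : Function.Even rotationalVSolitonField := fun p => by
  simp [rotationalVSolitonField]

theorem contDiffOn_rotationalVSolitonField :
    ContDiffOn ℝ 1 rotationalVSolitonField {p : ℝ × ℝ | |p.1| < π / 2} := fun p hp => by
  have hcos : cos p.1 ≠ 0 := (cos_pos_of_mem_Ioo (abs_lt.1 hp)).ne'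
  have htan : ContDiffAt ℝ 1 (fun q : ℝ × ℝ => tan q.1) p :=
    (contDiffAt_tan.2 hcos).comp p contDiffAt_fst
  refine ContDiffAt.contDiffWithinAt ?_
  unfold rotationalVSolitonField
  fun_prop

theorem rotational_V_soliton_symmetry_general (u v θ : ℝ → ℝ)
    (hu : ∀ s, HasDerivAt u (cos (θ s)) s)
    (hv : ∀ s, HasDerivAt v (sin (θ s)) s)
    (hθ : ∀ s, HasDerivAt θ (sin (θ s) * tan (u s) + cos (θ s)) s)
    (hbound : ∀ s, |u s| < π / 2)
    (hu0 : u 0 = 0) (hθ0 : θ 0 = 0) :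
    ∀ s : ℝ, u (-s) = -u s ∧ v (-s) = v s ∧ θ (-s) = -θ s := by
  have hβ : Function.Odd fun s => (u s, θ s) :=
    Function.Odd.of_solution_of_even (isOpen_lt (by fun_prop) continuous_const)
      contDiffOn_rotationalVSolitonField rotationalVSolitonField_even
      (fun p hp => by simpa using hp) (fun s => ⟨(hu s).prodMk (hθ s), hbound s⟩)
      (by simp [hu0, hθ0])
  have hθ_odd : Function.Odd θ := fun s => congrArg Prod.snd (hβ s)
  have hv_even : Function.Even v :=
    Function.Even.of_hasDerivAt_odd hv fun s => by simp [hθ_odd s]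
  exact fun s => ⟨congrArg Prod.fst (hβ s), hv_even s, hθ_odd s⟩

/-- A solution of the system `u' = cos θ`, `v' = sin θ`, `θ' = sin θ · tan u + cos θ`
(generating curve of a rotational `V`-soliton in `𝕊²×ℝ`) with `|u| < π/2` and initial
conditions `u(0) = v(0) = θ(0) = 0` satisfies `u(−s) = −u(s)`, `v(−s) = v(s)`,
`θ(−s) = −θ(s)`; in particular the curve `β = (u, v)` is symmetric about the `v`-axis. -/
theorem rotational_V_soliton_symmetry (u v θ : ℝ → ℝ)
    (hu : ∀ s, HasDerivAt u (cos (θ s)) s)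
    (hv : ∀ s, HasDerivAt v (sin (θ s)) s)
    (hθ : ∀ s, HasDerivAt θ (sin (θ s) * tan (u s) + cos (θ s)) s)
    (hbound : ∀ s, |u s| < π / 2)
    (hu0 : u 0 = 0) (hv0 : v 0 = 0) (hθ0 : θ 0 = 0) :
    ∀ s : ℝ, u (-s) = -u s ∧ v (-s) = v s ∧ θ (-s) = -θ s :=
  rotational_V_soliton_symmetry_general u v θ hu hv hθ hbound hu0 hθ0
end

section
/- Let u, v, θ : ℝ → ℝ be differentiable functions satisfying u'(s) = cos θ(s), v'(s) = sin θ(s), θ'(s) = sin θ(s) · tan u(s) + cos θ(s), and |u(s)| < π/2 for all s. Then v' has at most one zero on ℝ; consequently, each of the two branches β((0,∞)) and β((−∞,0)) of the curve β(s) = (u(s), v(s)) (when v'(0) = 0) is a graph over the v-axis, i.e. β is a bi-graph over the v-axis. -/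
open Real

lemma sign_change {f : ℝ → ℝ} {a c : ℝ} (hf : HasDerivAt f c a) (hc : 0 < c) (ha : f a = 0) :
    ∃ δ > 0, (∀ x, a < x → x < a + δ → 0 < f x) ∧ ∀ x, a - δ < x → x < a → f x < 0 := by
  rw [hasDerivAt_iff_tendsto_slope] at hf
  have h : ∀ᶠ x in nhdsWithin a {a}ᶜ, 0 < slope f a x := hf (Ioi_mem_nhds hc)
  rw [eventually_nhdsWithin_iff, Metric.eventually_nhds_iff] at h
  obtain ⟨δ, hδ, hδ'⟩ := h
  refine ⟨δ, hδ, ?_, ?_⟩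
  · intro x hx1 hx2
    have hs := hδ' (y := x) (by rw [Real.dist_eq, abs_lt]; constructor <;> linarith) (by simpa using hx1.ne')
    rw [slope_def_field, ha, sub_zero] at hs
    rcases div_pos_iff.mp hs with ⟨h1, _⟩ | ⟨_, h2⟩
    · exact h1
    · linarith
  · intro x hx1 hx2
    have hs := hδ' (y := x) (by rw [Real.dist_eq, abs_lt]; constructor <;> linarith) (by simpa using hx2.ne)
    rw [slope_def_field, ha, sub_zero] at hs
    rcases div_pos_iff.mp hs with ⟨_, h1⟩ | ⟨h2, _⟩
    · linarith
    · exact h2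

/-- At most one zero for a continuous function whose every zero is a strict sign change
(from negative to positive). -/
lemma at_most_one_zero {f : ℝ → ℝ} (hcont : Continuous f)
    (hsc : ∀ a, f a = 0 → ∃ δ > 0, (∀ x, a < x → x < a + δ → 0 < f x) ∧
      ∀ x, a - δ < x → x < a → f x < 0) :
    ∀ s₁ s₂ : ℝ, f s₁ = 0 → f s₂ = 0 → s₁ = s₂ := by
  -- key: no two zeros a < b
  have key : ∀ a b : ℝ, a < b → f a = 0 → f b = 0 → False := by
    intro a b hab ha hb
    obtain ⟨δ₂, hδ₂, _, hneg⟩ := hsc b hb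
    -- pick p ∈ (a, b) with f p < 0
    set p : ℝ := max a (b - δ₂/2) with hp
    have hap : a ≤ p := le_max_left _ _
    have hpb : p < b := by
      rcases max_cases a (b - δ₂/2) with ⟨h, _⟩ | ⟨h, _⟩ <;> rw [hp, h] <;> linarith
    have hfp : f p < 0 := hneg p (by rcases le_max_right a (b - δ₂/2) with h; linarith [le_max_right a (b - δ₂/2)]) hpb
    have hap' : a < p := hap.lt_of_ne (fun h => hfp.ne (h ▸ ha))
    -- sup of zeros in [a, p]
    set S : Set ℝ := {s | s ∈ Set.Icc a p ∧ f s = 0} with hS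
    have hSne : S.Nonempty := ⟨a, ⟨le_refl a, hap⟩, ha⟩
    have hSbdd : BddAbove S := ⟨p, fun x hx => hx.1.2⟩
    have hSclosed : IsClosed S := (isClosed_Icc.inter (isClosed_eq hcont continuous_const) : IsClosed (Set.Icc a p ∩ {s | f s = 0}))
    have htmem : sSup S ∈ S := hSclosed.csSup_mem hSne hSbdd
    set t := sSup S with ht
    obtain ⟨⟨hat, htp⟩, hft⟩ := htmem
    have htp' : t < p := htp.lt_of_ne (fun h => hfp.ne (h ▸ hft))
    obtain ⟨δ₁, hδ₁, hpos, _⟩ := hsc t hft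
    -- pick q ∈ (t, min (t+δ₁) p) with f q > 0
    set q : ℝ := min (t + δ₁/2) ((t + p)/2) with hq
    have htq : t < q := by
      rcases min_cases (t + δ₁/2) ((t + p)/2) with ⟨h, _⟩ | ⟨h, _⟩ <;> rw [hq, h] <;> linarith
    have hqp : q < p := by
      have := min_le_right (t + δ₁/2) ((t + p)/2); rw [← hq] at this; linarith
    have hfq : 0 < f q := hpos q htq (by
      have := min_le_left (t + δ₁/2) ((t + p)/2); rw [← hq] at this; linarith)
    -- IVT on [q, p]: zero z ∈ (t, p]
    have hsub := intermediate_value_Icc' hqp.le hcont.continuousOn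
    have : (0 : ℝ) ∈ Set.Icc (f p) (f q) := ⟨hfp.le, hfq.le⟩
    obtain ⟨z, hz, hfz⟩ := hsub this
    have hzS : z ∈ S := ⟨⟨le_trans hat (le_trans htq.le hz.1), hz.2⟩, hfz⟩
    have : z ≤ t := le_csSup hSbdd hzS
    linarith [lt_of_lt_of_le htq (hz.1)]
  intro s₁ s₂ h1 h2
  rcases lt_trichotomy s₁ s₂ with h | h | h
  · exact absurd (key s₁ s₂ h h1 h2) not_false
  · exact h
  · exact absurd (key s₂ s₁ h h2 h1) not_false

lemma sign_const {f : ℝ → ℝ} (hcont : Continuous f) {S : Set ℝ} (hS : Convex ℝ S)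
    (hne : ∀ s ∈ S, f s ≠ 0) {w : ℝ} (hw : w ∈ S) (hfw : 0 < f w) :
    ∀ s ∈ S, 0 < f s := by
  intro s hs
  by_contra h
  have hfs : f s < 0 := lt_of_le_of_ne (not_lt.mp h) (hne s hs)
  rcases le_total s w with hsw | hws
  · obtain ⟨z, hz, hfz⟩ := intermediate_value_Icc hsw hcont.continuousOn ⟨hfs.le, hfw.le⟩
    exact hne z (hS.ordConnected.out hs hw hz) hfz
  · obtain ⟨z, hz, hfz⟩ := intermediate_value_Icc' hws hcont.continuousOn ⟨hfs.le, hfw.le⟩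
    exact hne z (hS.ordConnected.out hw hs hz) hfz

/-- Along a solution of the system `u' = cos θ`, `v' = sin θ`, `θ' = sin θ · tan u + cos θ`
with `|u| < π/2` (generating curve `β = (u,v)` of a rotational `V`-soliton in `𝕊²×ℝ`),
the derivative `v'` has at most one zero; consequently, when `v'(0) = 0`, each of the two
branches `β((0,∞))` and `β((−∞,0))` is a graph over the `v`-axis (i.e. `v` is injective on
`(0,∞)` and on `(−∞,0)`), so `β` is a bi-graph over the `v`-axis. -/
theorem rotational_V_soliton_bigraph (u v θ : ℝ → ℝ)
    (hu : ∀ s, HasDerivAt u (cos (θ s)) s)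
    (hv : ∀ s, HasDerivAt v (sin (θ s)) s)
    (hθ : ∀ s, HasDerivAt θ (sin (θ s) * tan (u s) + cos (θ s)) s)
    (hbound : ∀ s, |u s| < π / 2) :
    (∀ s₁ s₂ : ℝ, deriv v s₁ = 0 → deriv v s₂ = 0 → s₁ = s₂) ∧
    (deriv v 0 = 0 → Set.InjOn v (Set.Ioi 0) ∧ Set.InjOn v (Set.Iio 0)) := by
  have hdv : ∀ s, deriv v s = sin (θ s) := fun s => (hv s).deriv
  set f : ℝ → ℝ := fun s => sin (θ s) with hf
  have hθc : Continuous θ := by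
    rw [continuous_iff_continuousAt]; exact fun s => (hθ s).continuousAt
  have hfc : Continuous f := Real.continuous_sin.comp hθc
  -- every zero of f is a strict sign change (v'' = 1 > 0 there)
  have hsc : ∀ a, f a = 0 → ∃ δ > 0, (∀ x, a < x → x < a + δ → 0 < f x) ∧
      ∀ x, a - δ < x → x < a → f x < 0 := by
    intro a hfa
    have hfa' : sin (θ a) = 0 := hfa
    have hder : HasDerivAt f (cos (θ a) * (sin (θ a) * tan (u a) + cos (θ a))) a := (hθ a).sin
    have hone : cos (θ a) * (sin (θ a) * tan (u a) + cos (θ a)) = 1 := by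
      have := sin_sq_add_cos_sq (θ a); rw [hfa']; nlinarith
    rw [hone] at hder
    exact sign_change hder one_pos hfa
  have huniq : ∀ s₁ s₂ : ℝ, f s₁ = 0 → f s₂ = 0 → s₁ = s₂ := at_most_one_zero hfc hsc
  constructor
  · intro s₁ s₂ h1 h2
    exact huniq s₁ s₂ ((hdv s₁).symm.trans h1) ((hdv s₂).symm.trans h2)
  · intro h0
    have hf0 : f 0 = 0 := (hdv 0).symm.trans h0
    have hne : ∀ s : ℝ, s ≠ 0 → f s ≠ 0 := fun s hs hfs => hs (huniq s 0 hfs hf0)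
    have hcontv : Continuous v := by
      rw [continuous_iff_continuousAt]; exact fun s => (hv s).continuousAt
    -- generic branch lemma
    have branch : ∀ S : Set ℝ, Convex ℝ S → interior S = S → (∀ s ∈ S, (s : ℝ) ≠ 0) →
        ∀ w ∈ S, Set.InjOn v S := by
      intro S hconv hint hS0 w hw
      have hneS : ∀ s ∈ S, f s ≠ 0 := fun s hs => hne s (hS0 s hs)
      rcases lt_or_gt_of_ne (hneS w hw) with hneg | hpos
      · have hposneg : ∀ s ∈ S, 0 < (fun s => -f s) s :=
          sign_const hfc.neg hconv (fun s hs h => hneS s hs (by simpa using neg_eq_zero.mp h)) hw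
            (by simpa using hneg)
        have : StrictAntiOn v S := by
          apply strictAntiOn_of_deriv_neg hconv hcontv.continuousOn
          intro x hx
          rw [hint] at hx
          rw [hdv x]
          have := hposneg x hx
          simp only at this; linarith
        exact this.injOn
      · have hposS : ∀ s ∈ S, 0 < f s := sign_const hfc hconv hneS hw hpos
        have : StrictMonoOn v S := by
          apply strictMonoOn_of_deriv_pos hconv hcontv.continuousOn
          intro x hx
          rw [hint] at hx
          rw [hdv x]
          exact hposS x hx
        exact this.injOn
    constructor
    · exact branch (Set.Ioi 0) (convex_Ioi 0) interior_Ioi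
        (fun s hs => ne_of_gt hs) 1 (by norm_num)
    · exact branch (Set.Iio 0) (convex_Iio 0) interior_Iio
        (fun s hs => ne_of_lt hs) (-1) (by norm_num)
end

section
/- Let 0 < b < ∞ and 0 ≤ c < π/2, and let u, v, θ : [0,b) → ℝ be differentiable functions satisfying u'(s) = cos θ(s), v'(s) = sin θ(s), θ'(s) = sin θ(s) · tan u(s) + cos θ(s), and |u(s)| ≤ c for all s ∈ [0,b). Then u, v and θ extend continuously to [0,b], i.e. the limits lim_{s→b⁻} u(s), lim_{s→b⁻} v(s) and lim_{s→b⁻} θ(s) exist and are finite. -/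
/-!
The right-hand sides of the system are bounded on `[0, b)`: `|cos θ|, |sin θ| ≤ 1`, and since
`|u| ≤ c < π/2` also `|sin θ · tan u + cos θ| ≤ tan c + 1`. By the mean value theorem `u`, `v`
and `θ` are then Lipschitz, hence uniformly continuous, on `[0, b)`, so they map the Cauchy filter
`𝓝[[0, b)] b` to a Cauchy filter of `ℝ`, which converges.
-/

open Real Filter Topology

theorem UniformContinuousOn.exists_tendsto_nhdsWithin {α β : Type*} [UniformSpace α]
    [UniformSpace β] [CompleteSpace β] {f : α → β} {s : Set α} (hf : UniformContinuousOn f s)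
    (x : α) : ∃ L, Tendsto f (𝓝[s] x) (𝓝 L) := by
  rcases (𝓝[s] x).eq_or_neBot with hx | hx
  · exact ⟨f x, by simp [hx]⟩
  · have hcauchy : Cauchy (map f (𝓝[s] x)) :=
      (cauchy_nhds.mono' hx nhdsWithin_le_nhds).map_of_le hf inf_le_right
    exact CompleteSpace.complete hcauchy

theorem Convex.exists_tendsto_nhdsWithin_of_norm_hasDerivWithin_le {𝕜 G : Type*} [RCLike 𝕜]
    [NormedAddCommGroup G] [NormedSpace 𝕜 G] [CompleteSpace G] {f f' : 𝕜 → G} {s : Set 𝕜}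
    {C : ℝ} (hs : Convex ℝ s) (hf : ∀ x ∈ s, HasDerivWithinAt f (f' x) s x)
    (bound : ∀ x ∈ s, ‖f' x‖ ≤ C) (x : 𝕜) : ∃ L, Tendsto f (𝓝[s] x) (𝓝 L) :=
  (hs.lipschitzOnWith_of_nnnorm_hasDerivWithin_le (C := C.toNNReal) hf fun y hy =>
    norm_toNNReal (a := f' y) ▸ Real.toNNReal_le_toNNReal (bound y hy)).uniformContinuousOn
    |>.exists_tendsto_nhdsWithin x

theorem Real.abs_tan_le_tan_of_abs_le {x c : ℝ} (hx : |x| ≤ c) (hc : c < π / 2) :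
    |tan x| ≤ tan c := by
  have key : ∀ y, 0 ≤ y → y ≤ c → |tan y| ≤ tan c := fun y hy₀ hyc => by
    rw [abs_of_nonneg (tan_nonneg_of_nonneg_of_le_pi_div_two hy₀ (by linarith))]
    exact strictMonoOn_tan.monotoneOn ⟨by linarith [pi_pos], by linarith⟩
      ⟨by linarith [pi_pos], hc⟩ hyc
  rcases abs_cases x with ⟨hx_eq, hx₀⟩ | ⟨hx_eq, hx₀⟩
  · exact key x hx₀ (hx_eq ▸ hx)
  · simpa [tan_neg] using key (-x) (by linarith) (hx_eq ▸ hx)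

theorem Real.abs_sin_mul_add_cos_le (a t : ℝ) : |sin a * t + cos a| ≤ |t| + 1 :=
  calc |sin a * t + cos a| ≤ |sin a| * |t| + |cos a| := by
        simpa only [abs_mul] using abs_add_le (sin a * t) (cos a)
    _ ≤ 1 * |t| + 1 := by
        gcongr
        exacts [abs_sin_le_one a, abs_cos_le_one a]
    _ = |t| + 1 := by rw [one_mul]

theorem rotational_V_soliton_extension_general (b c : ℝ) (u v θ : ℝ → ℝ)
    (hc : c < π / 2)
    (hu : ∀ s ∈ Set.Ico (0 : ℝ) b, HasDerivWithinAt u (cos (θ s)) (Set.Ico 0 b) s)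
    (hv : ∀ s ∈ Set.Ico (0 : ℝ) b, HasDerivWithinAt v (sin (θ s)) (Set.Ico 0 b) s)
    (hθ : ∀ s ∈ Set.Ico (0 : ℝ) b,
      HasDerivWithinAt θ (sin (θ s) * tan (u s) + cos (θ s)) (Set.Ico 0 b) s)
    (hbound : ∀ s ∈ Set.Ico (0 : ℝ) b, |u s| ≤ c) :
    (∃ L₁ : ℝ, Tendsto u (nhdsWithin b (Set.Ico 0 b)) (nhds L₁)) ∧
    (∃ L₂ : ℝ, Tendsto v (nhdsWithin b (Set.Ico 0 b)) (nhds L₂)) ∧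
    (∃ L₃ : ℝ, Tendsto θ (nhdsWithin b (Set.Ico 0 b)) (nhds L₃)) := by
  have hconv : Convex ℝ (Set.Ico (0 : ℝ) b) := convex_Ico 0 b
  have hθ_bound : ∀ s ∈ Set.Ico (0 : ℝ) b, |sin (θ s) * tan (u s) + cos (θ s)| ≤ tan c + 1 :=
    fun s hs => (abs_sin_mul_add_cos_le _ _).trans
      (by linarith [abs_tan_le_tan_of_abs_le (hbound s hs) hc])
  exact ⟨hconv.exists_tendsto_nhdsWithin_of_norm_hasDerivWithin_le hu
      (fun s _ => abs_cos_le_one (θ s)) b,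
    hconv.exists_tendsto_nhdsWithin_of_norm_hasDerivWithin_le hv
      (fun s _ => abs_sin_le_one (θ s)) b,
    hconv.exists_tendsto_nhdsWithin_of_norm_hasDerivWithin_le hθ hθ_bound b⟩

/-- A solution of the system `u' = cos θ`, `v' = sin θ`, `θ' = sin θ · tan u + cos θ`
defined on `[0,b)` with `|u| ≤ c < π/2` extends continuously to `[0,b]`: the one-sided
limits of `u`, `v` and `θ` at `b` exist and are finite. (This is the key step in showing
that generating curves of rotational `V`-solitons in `𝕊²×ℝ` are defined on all of `ℝ`.) -/
theorem rotational_V_soliton_extension (b c : ℝ) (u v θ : ℝ → ℝ)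
    (hb : 0 < b) (hc0 : 0 ≤ c) (hc : c < π / 2)
    (hu : ∀ s ∈ Set.Ico (0 : ℝ) b, HasDerivWithinAt u (cos (θ s)) (Set.Ico 0 b) s)
    (hv : ∀ s ∈ Set.Ico (0 : ℝ) b, HasDerivWithinAt v (sin (θ s)) (Set.Ico 0 b) s)
    (hθ : ∀ s ∈ Set.Ico (0 : ℝ) b,
      HasDerivWithinAt θ (sin (θ s) * tan (u s) + cos (θ s)) (Set.Ico 0 b) s)
    (hbound : ∀ s ∈ Set.Ico (0 : ℝ) b, |u s| ≤ c) :
    (∃ L₁ : ℝ, Tendsto u (nhdsWithin b (Set.Ico 0 b)) (nhds L₁)) ∧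
    (∃ L₂ : ℝ, Tendsto v (nhdsWithin b (Set.Ico 0 b)) (nhds L₂)) ∧
    (∃ L₃ : ℝ, Tendsto θ (nhdsWithin b (Set.Ico 0 b)) (nhds L₃)) :=
  rotational_V_soliton_extension_general b c u v θ hc hu hv hθ hbound
end

section
/- Let E₁, E₂ ∈ ℝ³ be orthonormal vectors and define R : ℝ⁴ → ℝ⁴ on points p = (p₁,p₂,p₃,p₄) by R(p) = (−⟨p̄, E₂⟩ E₁ + ⟨p̄, E₁⟩ E₂, 0), where p̄ = (p₁,p₂,p₃). Let u, v, θ : ℝ → ℝ be smooth functions satisfying u'(s) = cos θ(s), v'(s) = sin θ(s) and cos u(s) ≠ 0 for all s, let Ψ(s,φ) = (cos u(s) cos φ, cos u(s) sin φ, sin u(s), v(s)) and N(s,φ) = (sin θ(s) sin u(s) cos φ, sin θ(s) sin u(s) sin φ, −sin θ(s) cos u(s), cos θ(s)), and suppose the soliton equation θ'(s) − sin θ(s) · tan u(s) = ⟨N(s,φ), R(Ψ(s,φ))⟩ holds for all s ∈ ℝ and all φ ∈ ℝ. Then either (i) sin θ(s) = 0 for all s (so v is constant and the surface is a slice 𝕊²×{t₀}),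 or (ii) E₁ × E₂ = (0,0,1) or E₁ × E₂ = (0,0,−1), and θ'(s) = sin θ(s) · tan u(s) for all s (so the rotation axis of R is the z-axis and the surface is a minimal rotational surface, H ≡ 0). -/
open Real

/-- The standard Euclidean inner product on `ℝ³` (indexed by `Fin 3`). -/
noncomputable def ip3 (a b : Fin 3 → ℝ) : ℝ :=
  a 0 * b 0 + a 1 * b 1 + a 2 * b 2

/-- The cross product on `ℝ³` (indexed by `Fin 3`). -/
noncomputable def cross3 (a b : Fin 3 → ℝ) : Fin 3 → ℝ :=
  ![a 1 * b 2 - a 2 * b 1, a 2 * b 0 - a 0 * b 2, a 0 * b 1 - a 1 * b 0]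

/-- Classification of rotational `R`-solitons in `𝕊²×ℝ`: if the rotational surface
`Ψ(s,φ) = (cos u cos φ, cos u sin φ, sin u, v)` about the `z`-axis, with unit normal `N`
and mean curvature `H = θ' − sin θ · tan u`, satisfies the soliton equation `H = ⟨N, R∘Ψ⟩`
for the Killing field `R` of rotations in the plane of the orthonormal vectors `E₁, E₂`,
then either the surface is a slice `𝕊²×{t₀}` (`sin θ ≡ 0` and `v` constant), or the axis
of `R` is the `z`-axis (`E₁ × E₂ = ±(0,0,1)`) and the surface is minimal
(`θ' = sin θ · tan u`, i.e. `H ≡ 0`). -/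
theorem rotational_R_soliton_classification (u v θ : ℝ → ℝ)
    (hu : ContDiff ℝ (⊤ : ℕ∞) u) (hv : ContDiff ℝ (⊤ : ℕ∞) v) (hθ : ContDiff ℝ (⊤ : ℕ∞) θ)
    (hu' : ∀ s, deriv u s = cos (θ s))
    (hv' : ∀ s, deriv v s = sin (θ s))
    (hreg : ∀ s, cos (u s) ≠ 0)
    (Ψ N : ℝ → ℝ → Fin 4 → ℝ)
    (hΨ : ∀ s φ, Ψ s φ =
      ![cos (u s) * cos φ, cos (u s) * sin φ, sin (u s), v s])
    (hN : ∀ s φ, N s φ =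
      ![sin (θ s) * sin (u s) * cos φ, sin (θ s) * sin (u s) * sin φ,
        -(sin (θ s) * cos (u s)), cos (θ s)])
    (E₁ E₂ : Fin 3 → ℝ)
    (hE₁ : ip3 E₁ E₁ = 1) (hE₂ : ip3 E₂ E₂ = 1) (hE₁₂ : ip3 E₁ E₂ = 0)
    (R : (Fin 4 → ℝ) → Fin 4 → ℝ)
    (hR : ∀ p : Fin 4 → ℝ,
      R p = ![-ip3 ![p 0, p 1, p 2] E₂ * E₁ 0 + ip3 ![p 0, p 1, p 2] E₁ * E₂ 0,
              -ip3 ![p 0, p 1, p 2] E₂ * E₁ 1 + ip3 ![p 0, p 1, p 2] E₁ * E₂ 1,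
              -ip3 ![p 0, p 1, p 2] E₂ * E₁ 2 + ip3 ![p 0, p 1, p 2] E₁ * E₂ 2, 0])
    (hsoliton : ∀ s φ : ℝ,
      deriv θ s - sin (θ s) * tan (u s) = ip4 (N s φ) (R (Ψ s φ))) :
    ((∀ s, sin (θ s) = 0) ∧ ∃ t₀ : ℝ, ∀ s, v s = t₀) ∨
    ((cross3 E₁ E₂ = ![0, 0, 1] ∨ cross3 E₁ E₂ = ![0, 0, -1]) ∧
      ∀ s, deriv θ s = sin (θ s) * tan (u s)) := by

  set w0 := E₁ 1 * E₂ 2 - E₁ 2 * E₂ 1 with hw0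
  set w1 := E₁ 2 * E₂ 0 - E₁ 0 * E₂ 2 with hw1
  set w2 := E₁ 0 * E₂ 1 - E₁ 1 * E₂ 0 with hw2
  have key : ∀ s φ : ℝ, ip4 (N s φ) (R (Ψ s φ)) =
      sin (θ s) * (-w0 * sin φ + w1 * cos φ) := by
    intro s φ
    rw [hN, hR, hΨ]
    simp only [ip4, ip3, Matrix.cons_val_zero, Matrix.cons_val_one, Matrix.head_cons,
      Matrix.cons_val_two, Matrix.tail_cons, Matrix.cons_val_three, Matrix.head_fin_const]
    have h1 : sin (u s) ^ 2 + cos (u s) ^ 2 = 1 := sin_sq_add_cos_sq (u s)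
    have h2 : sin φ ^ 2 + cos φ ^ 2 = 1 := sin_sq_add_cos_sq φ
    rw [hw0, hw1]
    linear_combination (sin (θ s) * (-(E₁ 1 * E₂ 2 - E₁ 2 * E₂ 1) * sin φ +
      (E₁ 2 * E₂ 0 - E₁ 0 * E₂ 2) * cos φ)) * h1
  -- evaluate at φ = 0, π, π/2
  have h0 : ∀ s, deriv θ s - sin (θ s) * tan (u s) = sin (θ s) * w1 := by
    intro s
    have := hsoliton s 0
    rw [key] at this
    simpa using this
  have hpi : ∀ s, deriv θ s - sin (θ s) * tan (u s) = -(sin (θ s) * w1) := by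
    intro s
    have := hsoliton s π
    rw [key] at this
    simp [Real.sin_pi, Real.cos_pi] at this
    linarith [this]
  have hH : ∀ s, deriv θ s - sin (θ s) * tan (u s) = 0 := by
    intro s
    have := h0 s
    have := hpi s
    linarith
  have hmin : ∀ s, deriv θ s = sin (θ s) * tan (u s) := by
    intro s
    have := hH s
    linarith
  have hsw1 : ∀ s, sin (θ s) * w1 = 0 := by
    intro s
    have := h0 s
    rw [hH s] at this
    linarith
  have hsw0 : ∀ s, sin (θ s) * w0 = 0 := by
    intro s
    have := hsoliton s (π / 2)
    rw [key] at this
    rw [hH s] at this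
    simp [Real.sin_pi_div_two, Real.cos_pi_div_two] at this
    rcases this with h | h <;> simp [h, mul_comm]
  by_cases hcase : w0 = 0 ∧ w1 = 0
  · right
    constructor
    · have hlag : w2 * w2 = 1 := by
        simp only [ip3] at hE₁ hE₂ hE₁₂
        rw [hw2]
        nlinarith [hE₁, hE₂, hE₁₂, hcase.1, hcase.2, hw0, hw1]
      rcases mul_self_eq_one_iff.mp hlag with h | h
      · left
        funext i
        fin_cases i <;>
          simp [cross3, ← hw0, ← hw1, ← hw2, hcase.1, hcase.2, h] <;>
          linarith [hcase.1, hcase.2, h]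
      · right
        funext i
        fin_cases i <;>
          simp [cross3, ← hw0, ← hw1, ← hw2, hcase.1, hcase.2, h] <;>
          linarith [hcase.1, hcase.2, h]
    · exact hmin
  · left
    have hsin : ∀ s, sin (θ s) = 0 := by
      intro s
      rcases (not_and_or.mp hcase) with h | h
      · exact (mul_eq_zero.mp (hsw0 s)).resolve_right h
      · exact (mul_eq_zero.mp (hsw1 s)).resolve_right h
    refine ⟨hsin, v 0, fun s => ?_⟩
    have hconst : ∀ x y : ℝ, v x = v y :=
      fun x y => is_const_of_deriv_eq_zero (hv.differentiable (by simp))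
        (fun t => by rw [hv' t, hsin t]) x y
    exact hconst s 0
end
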